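/- Let s_1,…,s_l be positive integers, w = s_1+⋯+s_l, and I = {s_1, s_1+s_2, …, s_1+⋯+s_{l-1}}. Then for any positive integer n, ∑_{k=1}^n [n choose k]_q (-1)^k q^{binom(k,2)-nk} ∑_{1≤j_1≤⋯≤j_w=k, strict at positions in I} ∏_{i=1}^w q^{j_i}/[j_i]_q = (-1)^l ∑_{1≤k_1<⋯<k_l≤n} ∏_{i=1}^l q^{(s_i-1)k_i}/[k_i]_q^{s_i}. -/

import Mathlib

open scoped Classical

/-- The Gaussian `q`-binomial coefficient `[n choose k]_q = ∏_{i=1}^k (1-q^{n-k+i})/(1-q^i)`. -/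
noncomputable def qbinom (q : ℂ) (n k : ℕ) : ℂ :=
  ∏ i ∈ Finset.range k, (1 - q ^ (n - k + 1 + i)) / (1 - q ^ (1 + i))

/-- The `q`-integer `[k]_q = (1-q^k)/(1-q)`. -/
noncomputable def qint (q : ℂ) (k : ℕ) : ℂ := (1 - q ^ k) / (1 - q)

/-!
Write `c_n(k) = (-1)^k [n choose k]_q q^(binom(k,2) - n k)` (`qcoef`) and
`Φ_n(A) = ∑_{k=1}^n c_n(k) A(k)` (`qTransform`). Peeling off the top entry of a chain writes the
inner sum of the left-hand side as `q^k/[k]_q` times a partial sum of the same kind, so everything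
rests on three facts about `c`: the tail sums `∑_{k>m} q^k c_{n+1}(k)` equal `-c_n(m)`;
`[m]_q c_{n+1}(m)` is proportional to `c_n(m-1)`; and
`Φ_{n+1}(q^k/[k]_q B) - Φ_n(q^k/[k]_q B) = [n+1]_q⁻¹ ∑_k q^k c_{n+1}(k) B(k)`.
Summing by parts with the first two, a strict step of a chain turns this last sum back into `-Φ_n`
of the chain one block shorter, while each weak step only contributes a factor `q^{n+1}/[n+1]_q`.
Hence, by induction on `n`, the last block of `s_t` entries adds the term
`q^{(s_t-1)(n+1)}/[n+1]_q^{s_t}` times the sum for the first `t` blocks, which is exactly how the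
right-hand side grows from `n` to `n + 1`.
-/

open Finset

lemma qint_add_sub_qint (q : ℂ) (a b : ℕ) : qint q (a + b) - qint q a = q ^ a * qint q b := by
  simp only [qint, pow_add]
  ring

lemma qint_ne_zero {q : ℂ} {N m : ℕ} (hq : ∀ i, 1 ≤ i → i ≤ N → q ^ i ≠ 1)
    (hm : 1 ≤ m) (hmN : m ≤ N) : qint q m ≠ 0 :=
  div_ne_zero (sub_ne_zero.2 (hq m hm hmN).symm)
    (sub_ne_zero.2 (by simpa using (hq 1 le_rfl (hm.trans hmN)).symm))

section Coefficients

variable {q : ℂ}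

lemma qbinom_succ_succ {n k : ℕ} (hk : k ≤ n) (hqk : q ^ (k + 1) ≠ 1) :
    qbinom q (n + 1) (k + 1) * qint q (k + 1) = qint q (n + 1) * qbinom q n k := by
  have hne : 1 - q ^ (k + 1) ≠ 0 := sub_ne_zero.2 (Ne.symm hqk)
  have htop : n + 1 - (k + 1) + 1 + k = n + 1 := by omega
  rw [qbinom, prod_range_succ, htop, Nat.add_sub_add_right, add_comm 1 k, qbinom, qint, qint]
  field_simp

lemma qbinom_succ_mul_qint {n k : ℕ} (hk : k ≤ n) :
    qbinom q (n + 1) k * qint q (n + 1 - k) = qint q (n + 1) * qbinom q n k := by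
  have hnum : (∏ i ∈ range k, (1 - q ^ (n + 1 - k + 1 + i))) * (1 - q ^ (n + 1 - k)) =
      (1 - q ^ (n + 1)) * ∏ i ∈ range k, (1 - q ^ (n - k + 1 + i)) := by
    have h := prod_range_succ' (fun i => 1 - q ^ (n - k + 1 + i)) k
    rw [prod_range_succ, show n - k + 1 + k = n + 1 by omega] at h
    rw [show n + 1 - k = n - k + 1 by omega, mul_comm (1 - q ^ (n + 1))]
    convert h.symm using 3
    ring_nf
  simp only [qbinom, qint, prod_div_distrib]
  rw [div_mul_div_comm, hnum, mul_comm _ (1 - q), mul_div_mul_comm]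

noncomputable def qcoef (q : ℂ) (n k : ℕ) : ℂ :=
  (-1) ^ k * qbinom q n k * q ^ ((k.choose 2 : ℤ) - n * k)

lemma qcoef_zero (q : ℂ) (n : ℕ) : qcoef q n 0 = 1 := by
  simp [qcoef, qbinom]

lemma qcoef_mul_qint_succ (hq0 : q ≠ 0) {n k : ℕ} (hk : k ≤ n) :
    qcoef q n k * qint q (n + 1) = q ^ k * qcoef q (n + 1) k * qint q (n + 1 - k) := by
  have hexp :
      q ^ k * q ^ ((k.choose 2 : ℤ) - (n + 1 : ℕ) * k) = q ^ ((k.choose 2 : ℤ) - n * k) := by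
    rw [← zpow_natCast, ← zpow_add₀ hq0]
    push_cast
    ring_nf
  simp only [qcoef]
  linear_combination -(-1) ^ k * qbinom q n k * qint q (n + 1) * hexp -
    (-1) ^ k * q ^ k * q ^ ((k.choose 2 : ℤ) - (n + 1 : ℕ) * k) *
      qbinom_succ_mul_qint (q := q) hk

lemma qcoef_succ_succ (hq0 : q ≠ 0) {n k : ℕ} (hk : k ≤ n) (hqk : q ^ (k + 1) ≠ 1) :
    q ^ (n + 1) * qint q (k + 1) * qcoef q (n + 1) (k + 1) = -(qint q (n + 1) * qcoef q n k) := by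
  have hexp : q ^ (n + 1) * q ^ (((k + 1).choose 2 : ℕ) - ((n + 1 : ℕ) : ℤ) * (k + 1 : ℕ)) =
      q ^ ((k.choose 2 : ℤ) - n * k) := by
    rw [← zpow_natCast, ← zpow_add₀ hq0]
    push_cast [Nat.choose_succ_succ, Nat.choose_one_right]
    ring_nf
  simp only [qcoef]
  linear_combination
    (-1) ^ (k + 1) * q ^ (((k + 1).choose 2 : ℕ) - ((n + 1 : ℕ) : ℤ) * (k + 1 : ℕ)) *
      q ^ (n + 1) * qbinom_succ_succ hk hqk - qint q (n + 1) * (-1) ^ k * qbinom q n k * hexp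

end Coefficients

lemma sum_Icc_mul_sum_Icc_sub {R : Type*} [CommSemiring R] (δ N : ℕ) (d F : ℕ → R) :
    ∑ k ∈ Icc 1 N, d k * ∑ m ∈ Icc 1 (k - δ), F m =
      ∑ m ∈ Icc 1 (N - δ), F m * ∑ k ∈ Icc (m + δ) N, d k := by
  simp_rw [mul_sum]
  rw [sum_comm' (t' := Icc 1 (N - δ)) (s' := fun m => Icc (m + δ) N)
    (fun k m => by simp only [mem_Icc]; omega)]
  simp_rw [mul_comm]

section Transform

variable {q : ℂ} {n : ℕ}

noncomputable def qTransform (q : ℂ) (n : ℕ) (A : ℕ → ℂ) : ℂ :=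
  ∑ k ∈ Icc 1 n, qcoef q n k * A k

lemma sum_Icc_pow_mul_qcoef_tail (hq0 : q ≠ 0)
    (hq : ∀ i, 1 ≤ i → i ≤ n + 1 → q ^ i ≠ 1) {m : ℕ} (hm : m ≤ n) :
    ∑ k ∈ Icc (m + 1) (n + 1), q ^ k * qcoef q (n + 1) k = -qcoef q n m := by
  have hn := qint_ne_zero hq (by omega) le_rfl
  induction hm using Nat.decreasingInduction with
  | self =>
    rw [Icc_self, sum_singleton]
    apply mul_left_cancel₀ hn
    linear_combination qcoef_succ_succ hq0 le_rfl (hq _ (by omega) le_rfl)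
  | of_succ m hm ih =>
    rw [← add_sum_Ioc_eq_sum_Icc (by omega), ← Icc_add_one_left_eq_Ioc, ih]
    obtain ⟨d, rfl⟩ : ∃ d, n = m + 1 + d := ⟨n - (m + 1), by omega⟩
    have hshift := qcoef_mul_qint_succ hq0 (show m + 1 ≤ m + 1 + d by omega)
    rw [show m + 1 + d + 1 - (m + 1) = d + 1 by omega] at hshift
    have hint := qint_add_sub_qint q (d + 1) (m + 1)
    rw [show d + 1 + (m + 1) = m + 1 + d + 1 by omega] at hint
    apply mul_left_cancel₀ hn
    linear_combination qcoef_succ_succ hq0 hm.le (hq _ (by omega) (by omega)) - hshift +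
      q ^ (m + 1) * qcoef q (m + 1 + d + 1) (m + 1) * hint

lemma sum_Icc_pow_mul_qcoef_mul_partialSum (hq0 : q ≠ 0)
    (hq : ∀ i, 1 ≤ i → i ≤ n + 1 → q ^ i ≠ 1) (B : ℕ → ℂ) :
    ∑ k ∈ Icc 1 (n + 1), q ^ k * qcoef q (n + 1) k * ∑ m ∈ Icc 1 k, q ^ m / qint q m * B m =
      q ^ (n + 1) / qint q (n + 1) * ∑ k ∈ Icc 1 (n + 1), q ^ k * qcoef q (n + 1) k * B k := by
  have hswap := sum_Icc_mul_sum_Icc_sub 0 (n + 1) (fun k => q ^ k * qcoef q (n + 1) k)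
    (fun m => q ^ m / qint q m * B m)
  simp only [Nat.sub_zero, add_zero] at hswap
  rw [hswap, mul_sum]
  refine sum_congr rfl fun m hm => ?_
  obtain ⟨k, rfl⟩ : ∃ k, m = k + 1 := ⟨m - 1, by simp only [mem_Icc] at hm; omega⟩
  have hk : k ≤ n := by simp only [mem_Icc] at hm; omega
  rw [sum_Icc_pow_mul_qcoef_tail hq0 hq hk]
  have hqk := qint_ne_zero hq (by omega) (by omega : k + 1 ≤ n + 1)
  have hqn := qint_ne_zero hq (by omega) le_rfl
  field_simp
  linear_combination -B (k + 1) * qcoef_succ_succ hq0 hk (hq (k + 1) (by omega) (by omega))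

lemma sum_Icc_pow_mul_qcoef_mul_strictPartialSum (hq0 : q ≠ 0)
    (hq : ∀ i, 1 ≤ i → i ≤ n + 1 → q ^ i ≠ 1) (F : ℕ → ℂ) :
    ∑ k ∈ Icc 1 (n + 1), q ^ k * qcoef q (n + 1) k * ∑ m ∈ Icc 1 (k - 1), F m =
      -qTransform q n F := by
  rw [sum_Icc_mul_sum_Icc_sub 1, qTransform, Nat.add_sub_cancel, ← sum_neg_distrib]
  refine sum_congr rfl fun m hm => ?_
  rw [sum_Icc_pow_mul_qcoef_tail hq0 hq (mem_Icc.1 hm).2]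
  ring

lemma sum_Icc_pow_mul_qcoef (hq0 : q ≠ 0) (hq : ∀ i, 1 ≤ i → i ≤ n + 1 → q ^ i ≠ 1) :
    ∑ k ∈ Icc 1 (n + 1), q ^ k * qcoef q (n + 1) k = -1 := by
  rw [← qcoef_zero q n, ← sum_Icc_pow_mul_qcoef_tail hq0 hq (Nat.zero_le n)]

lemma qTransform_succ (hq0 : q ≠ 0) (hq : ∀ i, 1 ≤ i → i ≤ n + 1 → q ^ i ≠ 1)
    (B : ℕ → ℂ) :
    qTransform q (n + 1) (fun k => q ^ k / qint q k * B k) =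
      qTransform q n (fun k => q ^ k / qint q k * B k) +
        (∑ k ∈ Icc 1 (n + 1), q ^ k * qcoef q (n + 1) k * B k) / qint q (n + 1) := by
  have hqn := qint_ne_zero hq (by omega) le_rfl
  rw [qTransform, qTransform, sum_Icc_succ_top (by omega), sum_Icc_succ_top (by omega), add_div,
    sum_div, ← add_assoc, ← sum_add_distrib]
  congr 1
  · refine sum_congr rfl fun k hk => ?_
    obtain ⟨hk1, hkn⟩ := mem_Icc.1 hk
    have hqk := qint_ne_zero hq hk1 (by omega : k ≤ n + 1)
    have hint := qint_add_sub_qint q k (n + 1 - k)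
    rw [show k + (n + 1 - k) = n + 1 by omega] at hint
    field_simp
    linear_combination B k * qcoef q (n + 1) k * hint - B k * qcoef_mul_qint_succ hq0 hkn
  · field_simp

end Transform

lemma snoc_mk_of_lt {α : Type*} {w m : ℕ} (j : Fin w → α) (k : α) (hm : m < w) :
    (Fin.snoc j k : Fin (w + 1) → α) ⟨m, Nat.lt_succ_of_lt hm⟩ = j ⟨m, hm⟩ :=
  Fin.snoc_castSucc (α := fun _ => α) k j ⟨m, hm⟩

lemma snoc_mk_self {α : Type*} {w : ℕ} (j : Fin w → α) (k : α) :
    (Fin.snoc j k : Fin (w + 1) → α) ⟨w, Nat.lt_succ_self w⟩ = k :=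
  Fin.snoc_last (α := fun _ => α) k j

section Chains

variable (strict : ℕ → Prop)

def IsMarkedChain {w : ℕ} (j : Fin w → ℕ) : Prop :=
  ∀ (m : ℕ) (hm : m + 1 < w), j ⟨m, Nat.lt_of_succ_lt hm⟩ ≤ j ⟨m + 1, hm⟩ ∧
    (strict (m + 1) → j ⟨m, Nat.lt_of_succ_lt hm⟩ < j ⟨m + 1, hm⟩)

noncomputable def markedChainFinset (w N : ℕ) : Finset (Fin w → ℕ) :=
  (Fintype.piFinset fun _ => Icc 1 N).filter (IsMarkedChain strict)

variable {strict}

lemma IsMarkedChain.monotone {w : ℕ} {j : Fin w → ℕ} (h : IsMarkedChain strict j) :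
    Monotone j := by
  cases w with
  | zero => exact fun a => a.elim0
  | succ w => exact Fin.monotone_iff_le_succ.2 fun i => (h i (by omega)).1

lemma isMarkedChain_true_iff {w : ℕ} {j : Fin w → ℕ} :
    IsMarkedChain (fun _ => True) j ↔ StrictMono j := by
  cases w with
  | zero => exact ⟨fun _ a => a.elim0, fun _ m hm => by omega⟩
  | succ w =>
    rw [Fin.strictMono_iff_lt_succ]
    exact ⟨fun h i => (h i (by omega)).2 trivial,
      fun h m hm => ⟨(h ⟨m, by omega⟩).le, fun _ => h ⟨m, by omega⟩⟩⟩

lemma sum_markedChainFinset_zero (N : ℕ) (G : Fin 0 → ℕ → ℂ) :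
    ∑ j ∈ markedChainFinset strict 0 N, ∏ i, G i (j i) = 1 := by
  have hchain : IsMarkedChain strict (Fin.elim0 : Fin 0 → ℕ) := fun m hm => by omega
  have hsingle : markedChainFinset strict 0 N = {Fin.elim0} :=
    eq_singleton_iff_unique_mem.2
      ⟨mem_filter.2 ⟨Fintype.mem_piFinset.2 fun i => i.elim0, hchain⟩,
        fun _ _ => Subsingleton.elim _ _⟩
  rw [hsingle, sum_singleton, univ_eq_empty, prod_empty]

variable [DecidablePred strict]

lemma isMarkedChain_snoc_iff {w k : ℕ} (hk : 1 ≤ k) {j : Fin w → ℕ} :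
    IsMarkedChain strict (Fin.snoc j k : Fin (w + 1) → ℕ) ↔
      IsMarkedChain strict j ∧ ∀ i, j i ≤ if strict w then k - 1 else k := by
  constructor
  · intro h
    have hj : IsMarkedChain strict j := fun m hm => by
      simpa only [snoc_mk_of_lt j k hm, snoc_mk_of_lt j k (Nat.lt_of_succ_lt hm)]
        using h m (by omega)
    refine ⟨hj, fun i => ?_⟩
    have hw : w - 1 + 1 = w := by have := i.isLt; omega
    have hlast := h (w - 1) (by omega)
    simp only [snoc_mk_of_lt j k (show w - 1 < w by omega), hw, snoc_mk_self] at hlast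
    have hi := hj.monotone
      (show i ≤ ⟨w - 1, by omega⟩ from Fin.le_def.2 (Nat.le_sub_one_of_lt i.isLt))
    split_ifs with hs
    · have := hlast.2 hs
      omega
    · exact hi.trans hlast.1
  · rintro ⟨hj, hb⟩ m hm
    by_cases hmw : m + 1 < w
    · simpa only [snoc_mk_of_lt j k hmw, snoc_mk_of_lt j k (Nat.lt_of_succ_lt hmw)]
        using hj m hmw
    · obtain rfl : m + 1 = w := by omega
      have := hb ⟨m, by omega⟩
      simp only [snoc_mk_of_lt j k (show m < m + 1 by omega), snoc_mk_self]
      split_ifs at this with hs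
      · exact ⟨by omega, fun _ => by omega⟩
      · exact ⟨this, fun h => absurd h hs⟩

lemma sum_isMarkedChain_last_eq {w N k : ℕ} (hk : k ∈ Icc 1 N)
    (G : Fin (w + 1) → ℕ → ℂ) :
    ∑ j ∈ (Fintype.piFinset fun _ => Icc 1 N).filter
        (fun j => IsMarkedChain strict j ∧ j (Fin.last w) = k), ∏ i, G i (j i) =
      G (Fin.last w) k * ∑ j ∈ markedChainFinset strict w (if strict w then k - 1 else k),
        ∏ i, G i.castSucc (j i) := by
  obtain ⟨hk1, hkN⟩ := mem_Icc.1 hk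
  have hbound : (if strict w then k - 1 else k) ≤ k := by split_ifs <;> omega
  rw [mul_sum]
  symm
  refine sum_nbij' (Fin.snoc · k) Fin.init (fun j hj => ?_) (fun j hj => ?_)
    (fun j _ => Fin.init_snoc (α := fun _ => ℕ) k j) (fun j hj => ?_) (fun j _ => ?_)
  · simp only [markedChainFinset, mem_filter, Fintype.mem_piFinset, mem_Icc] at hj ⊢
    refine ⟨Fin.lastCases ?_ (fun i => ?_),
      (isMarkedChain_snoc_iff hk1).2 ⟨hj.2, fun i => (hj.1 i).2⟩,
      Fin.snoc_last (α := fun _ => ℕ) k j⟩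
    · simpa only [Fin.snoc_last] using ⟨hk1, hkN⟩
    · simp only [Fin.snoc_castSucc]
      exact ⟨(hj.1 i).1, by have := (hj.1 i).2; omega⟩
  · simp only [markedChainFinset, mem_filter, Fintype.mem_piFinset, mem_Icc] at hj ⊢
    obtain ⟨hmem, hchain, hlast⟩ := hj
    rw [← Fin.snoc_init_self j, hlast, isMarkedChain_snoc_iff hk1] at hchain
    exact ⟨fun i => ⟨(hmem i.castSucc).1, hchain.2 i⟩, hchain.1⟩
  · simp only [mem_filter] at hj
    rw [← hj.2.2]
    exact Fin.snoc_init_self j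
  · rw [Fin.prod_univ_castSucc]
    simp only [Fin.snoc_castSucc, Fin.snoc_last]
    ring

lemma sum_markedChainFinset_succ (w N : ℕ) (G : Fin (w + 1) → ℕ → ℂ) :
    ∑ j ∈ markedChainFinset strict (w + 1) N, ∏ i, G i (j i) =
      ∑ k ∈ Icc 1 N, G (Fin.last w) k *
        ∑ j ∈ markedChainFinset strict w (if strict w then k - 1 else k),
          ∏ i, G i.castSucc (j i) := by
  rw [← sum_fiberwise_of_maps_to (s := markedChainFinset strict (w + 1) N)
    (g := fun j => j (Fin.last w)) (t := Icc 1 N) fun j hj =>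
    Fintype.mem_piFinset.1 (mem_filter.1 hj).1 _]
  refine sum_congr rfl fun k hk => ?_
  rw [markedChainFinset, filter_filter]
  exact sum_isMarkedChain_last_eq hk G

end Chains

section Sums

variable (q : ℂ) (I : Finset ℕ) (s : ℕ → ℕ)

noncomputable def chainSum (w N : ℕ) : ℂ :=
  ∑ j ∈ markedChainFinset (· ∈ I) w N, ∏ i, q ^ j i / qint q (j i)

/-- The sum over the chains of length `w` that stay below a new top entry `k`. -/
noncomputable def chainSumBelow (w k : ℕ) : ℂ :=
  chainSum q I w (if w ∈ I then k - 1 else k)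

noncomputable def strictSum (t N : ℕ) : ℂ :=
  ∑ f ∈ (Fintype.piFinset fun _ : Fin t => Icc 1 N).filter (fun f => StrictMono f),
    ∏ i : Fin t, q ^ ((s i - 1) * f i) / qint q (f i) ^ s i

lemma chainSum_zero (N : ℕ) : chainSum q I 0 N = 1 :=
  sum_markedChainFinset_zero N fun _ m => q ^ m / qint q m

lemma chainSum_succ (w N : ℕ) :
    chainSum q I (w + 1) N = ∑ k ∈ Icc 1 N, q ^ k / qint q k * chainSumBelow q I w k :=
  sum_markedChainFinset_succ w N fun _ m => q ^ m / qint q m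

lemma strictSum_eq_sum_markedChainFinset (t N : ℕ) :
    strictSum q s t N = ∑ f ∈ markedChainFinset (fun _ => True) t N,
      ∏ i : Fin t, q ^ ((s i - 1) * f i) / qint q (f i) ^ s i := by
  simp_rw [strictSum, markedChainFinset, isMarkedChain_true_iff]

lemma strictSum_zero_left (N : ℕ) : strictSum q s 0 N = 1 := by
  rw [strictSum_eq_sum_markedChainFinset,
    sum_markedChainFinset_zero N fun i m => q ^ ((s i - 1) * m) / qint q m ^ s i]

lemma strictSum_succ_left (t N : ℕ) :
    strictSum q s (t + 1) N =
      ∑ m ∈ Icc 1 N, q ^ ((s t - 1) * m) / qint q m ^ s t * strictSum q s t (m - 1) := by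
  rw [strictSum_eq_sum_markedChainFinset,
    sum_markedChainFinset_succ t N fun i m => q ^ ((s i - 1) * m) / qint q m ^ s i]
  simp only [strictSum_eq_sum_markedChainFinset, if_true, Fin.val_last, Fin.val_castSucc]

lemma strictSum_succ_zero (t : ℕ) : strictSum q s (t + 1) 0 = 0 := by
  simp [strictSum_succ_left]

lemma strictSum_succ_succ (t N : ℕ) :
    strictSum q s (t + 1) (N + 1) = strictSum q s (t + 1) N +
      q ^ ((s t - 1) * (N + 1)) / qint q (N + 1) ^ s t * strictSum q s t N := by
  rw [strictSum_succ_left, strictSum_succ_left, sum_Icc_succ_top (by omega), Nat.add_sub_cancel]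

end Sums

section Composition

variable {q : ℂ} {I : Finset ℕ} {s : ℕ → ℕ} {l : ℕ}

lemma sum_pow_mul_qcoef_mul_chainSumBelow (hq0 : q ≠ 0) (hs : ∀ i < l, 1 ≤ s i)
    (hI : ∀ t < l, ∀ e < s t, ∑ i ∈ range t, s i + e ∈ I ↔ e = 0 ∧ t ≠ 0)
    {n t : ℕ} (hq : ∀ i, 1 ≤ i → i ≤ n + 1 → q ^ i ≠ 1) (ht : t < l)
    (ih : t ≠ 0 → qTransform q n (fun k => q ^ k / qint q k *
      chainSumBelow q I (∑ i ∈ range t, s i - 1) k) = (-1) ^ t * strictSum q s t n) :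
    ∀ e < s t, ∑ k ∈ Icc 1 (n + 1), q ^ k * qcoef q (n + 1) k *
        chainSumBelow q I (∑ i ∈ range t, s i + e) k =
      -((q ^ (n + 1) / qint q (n + 1)) ^ e * ((-1) ^ t * strictSum q s t n)) := by
  intro e
  induction e with
  | zero =>
    intro he
    rcases Nat.eq_zero_or_pos t with rfl | htpos
    · simp [chainSumBelow, chainSum_zero, sum_Icc_pow_mul_qcoef hq0 hq, strictSum_zero_left]
    · have hmem := (hI t ht 0 he).2 ⟨rfl, htpos.ne'⟩
      obtain ⟨u, hu⟩ : ∃ u, ∑ i ∈ range t, s i = u + 1 := by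
        obtain ⟨t', rfl⟩ := Nat.exists_eq_add_one_of_ne_zero htpos.ne'
        have := hs t' ht.le
        exact ⟨∑ i ∈ range (t' + 1), s i - 1, by rw [sum_range_succ]; omega⟩
      rw [add_zero] at hmem ⊢
      simp_rw [chainSumBelow, if_pos hmem, hu, chainSum_succ]
      rw [sum_Icc_pow_mul_qcoef_mul_strictPartialSum hq0 hq, ← Nat.add_sub_cancel u 1, ← hu,
        ih htpos.ne']
      ring
  | succ e ih' =>
    intro he
    have hmem : ∑ i ∈ range t, s i + (e + 1) ∉ I := fun h => by
      have := (hI t ht (e + 1) he).1 h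
      omega
    simp_rw [chainSumBelow, if_neg hmem, ← add_assoc, chainSum_succ]
    rw [sum_Icc_pow_mul_qcoef_mul_partialSum hq0 hq, ih' (by omega)]
    ring

lemma qTransform_chainSumBelow (hq0 : q ≠ 0) (hs : ∀ i < l, 1 ≤ s i)
    (hI : ∀ t < l, ∀ e < s t, ∑ i ∈ range t, s i + e ∈ I ↔ e = 0 ∧ t ≠ 0) (n : ℕ)
    (hq : ∀ i, 1 ≤ i → i ≤ n → q ^ i ≠ 1) {t : ℕ} (ht : t < l) :
    qTransform q n (fun k => q ^ k / qint q k *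
      chainSumBelow q I (∑ i ∈ range (t + 1), s i - 1) k) =
      (-1) ^ (t + 1) * strictSum q s (t + 1) n := by
  induction n generalizing t with
  | zero => simp [qTransform, strictSum_succ_zero]
  | succ n ih =>
    have hq' : ∀ i, 1 ≤ i → i ≤ n → q ^ i ≠ 1 := fun i h1 h2 => hq i h1 (by omega)
    obtain ⟨e, he⟩ : ∃ e, s t = e + 1 := ⟨s t - 1, by have := hs t ht; omega⟩
    have hsplit : ∑ i ∈ range (t + 1), s i - 1 = ∑ i ∈ range t, s i + e := by
      rw [sum_range_succ]
      omega
    have hblock := sum_pow_mul_qcoef_mul_chainSumBelow hq0 hs hI hq ht (fun ht0 => by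
      obtain ⟨t', rfl⟩ := Nat.exists_eq_add_one_of_ne_zero ht0
      exact ih hq' (by omega)) e (by omega)
    have hqn := qint_ne_zero hq (by omega) le_rfl
    rw [qTransform_succ hq0 hq, ih hq' ht, hsplit, hblock, strictSum_succ_succ, he,
      Nat.add_sub_cancel, div_pow, ← pow_mul, mul_comm (n + 1) e]
    field_simp
    ring

lemma partialSum_add_mem_image_iff {t e : ℕ} (ht : t < l) (he : e < s t) :
    ∑ i ∈ range t, s i + e ∈ (range (l - 1)).image (fun t => ∑ i ∈ range (t + 1), s i) ↔
      e = 0 ∧ t ≠ 0 := by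
  have hmono : Monotone fun t => ∑ i ∈ range t, s i := fun a b hab =>
    sum_le_sum_of_subset (range_subset_range.2 hab)
  simp only [mem_image, mem_range]
  constructor
  · rintro ⟨t', ht', heq⟩
    have hle : t' + 1 ≤ t := by
      by_contra h
      have := hmono (show t + 1 ≤ t' + 1 by omega)
      simp only [sum_range_succ] at this heq
      omega
    have := hmono hle
    simp only at this
    omega
  · rintro ⟨rfl, ht0⟩
    exact ⟨t - 1, by omega, by rw [Nat.sub_add_cancel (by omega), add_zero]⟩

end Composition

theorem stmt_8 (l : ℕ) (s : ℕ → ℕ) (hs : ∀ i < l, 1 ≤ s i)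
    (w : ℕ) (hw : w = ∑ i ∈ Finset.range l, s i) (hw1 : 1 ≤ w)
    (I : Finset ℕ)
    (hI : I = (Finset.range (l - 1)).image fun t => ∑ i ∈ Finset.range (t + 1), s i)
    (n : ℕ) (q : ℂ) (hq0 : q ≠ 0)
    (hq : ∀ i, 1 ≤ i → i ≤ n → q ^ i ≠ 1) :
    ∑ k ∈ Finset.Icc 1 n,
        qbinom q n k * (-1) ^ k * q ^ ((Nat.choose k 2 : ℤ) - (n : ℤ) * k) *
          ∑ j ∈ (Fintype.piFinset fun _ : Fin w => Finset.Icc 1 n).filter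
            (fun j => (∀ (m : ℕ) (hm : m + 1 < w),
              j ⟨m, Nat.lt_of_succ_lt hm⟩ ≤ j ⟨m + 1, hm⟩ ∧
                ((m + 1) ∈ I → j ⟨m, Nat.lt_of_succ_lt hm⟩ < j ⟨m + 1, hm⟩)) ∧
              j ⟨w - 1, by omega⟩ = k),
            ∏ i : Fin w, q ^ (j i) / qint q (j i)
      = (-1) ^ l *
          ∑ f ∈ (Fintype.piFinset fun _ : Fin l => Finset.Icc 1 n).filter
            (fun f => StrictMono f),
            ∏ i : Fin l, q ^ ((s i.val - 1) * f i) / (qint q (f i)) ^ (s i.val) := by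
  obtain ⟨v, rfl⟩ : ∃ v, w = v + 1 := ⟨w - 1, by omega⟩
  obtain ⟨t, rfl⟩ : ∃ t, l = t + 1 :=
    Nat.exists_eq_add_one_of_ne_zero (by rintro rfl; simp at hw)
  have hmain := qTransform_chainSumBelow hq0 hs
    (fun t ht e he => hI ▸ partialSum_add_mem_image_iff ht he) n hq (Nat.lt_succ_self t)
  rw [← hw, Nat.add_sub_cancel, strictSum] at hmain
  rw [← hmain, qTransform]
  refine sum_congr rfl fun k hk => ?_
  rw [qcoef, mul_comm ((-1 : ℂ) ^ k), ← show _ = q ^ k / qint q k * chainSumBelow q I v k from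
    sum_isMarkedChain_last_eq (strict := (· ∈ I)) hk fun _ m => q ^ m / qint q m]
  rfl
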